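/- arXiv:2302.02652 — 11 statements merged into one kernel-verified Lean document; each statement's English description precedes it below -/
import Mathlib

section
/- In a cycle set S, the element Ω_k(t_1,...,t_k), defined inductively by Ω_1(x_1) = x_1 and Ω_k(x_1,...,x_k) = Ω_{k-1}(x_1,...,x_{k-1}) * Ω_{k-1}(x_1,...,x_{k-2},x_k), is invariant under any permutation of the first k−1 entries. -/
/-!
Unfolding the recursion twice gives
`Ω_{k+2}(u, a, b, c) = (Ω_k(u, a) * Ω_k(u, b)) * (Ω_k(u, a) * Ω_k(u, c))`,
so the cycle set identity says precisely that `Ω` is unchanged when the two entries before the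
last one are swapped. Since `Ω_{k+1}(u, a, b) = Ω_k(u, a) * Ω_k(u, b)`, a transposition of
entries of `u` that leaves both factors unchanged also leaves `Ω_{k+1}` unchanged. By induction
on `k`, conjugating the swap above by such transpositions yields every transposition of two
non-last entries, and these generate the permutations fixing the last entry.
-/

/-- Dehornoy's `Ω` expression: `Omega op k t` is `Ω_{k+1}(t 0, …, t k)`,
defined by `Ω_1(x) = x` and
`Ω_k(x_1,…,x_k) = Ω_{k-1}(x_1,…,x_{k-1}) * Ω_{k-1}(x_1,…,x_{k-2},x_k)`. -/
def Omega {S : Type*} (op : S → S → S) : (k : ℕ) → (Fin (k + 1) → S) → S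
  | 0, t => t 0
  | k + 1, t =>
      op (Omega op k fun i => t i.castSucc)
        (Omega op k fun i =>
          if i = Fin.last k then t (Fin.last (k + 1)) else t i.castSucc)

open Equiv

theorem Equiv.Perm.mem_of_swap_mem_of_apply_eq {α : Type*} [Finite α] [DecidableEq α]
    {M : Submonoid (Perm α)} {a : α} (hM : ∀ x y, x ≠ a → y ≠ a → swap x y ∈ M)
    {σ : Perm α} (hσ : σ a = a) : σ ∈ M := by
  have hσ' : ∀ x, σ x ≠ a ↔ x ≠ a := fun x => σ.injective.ne_iff' hσ
  rw [← Perm.ofSubtype_subtypePerm (p := (· ≠ a)) hσ' fun x hx hxa => hx (by rw [hxa, hσ])]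
  induction σ.subtypePerm (p := (· ≠ a)) hσ' using Perm.swap_induction_on with
  | one => rw [map_one]; exact M.one_mem
  | swap_mul f x y _ hf =>
    rw [map_mul, Perm.ofSubtype_swap_eq]
    exact M.mul_mem (hM _ _ x.2 y.2) hf

namespace Fin

variable {α : Type*} {n : ℕ}

theorem snoc_comp_swap_castSucc (f : Fin n → α) (a : α) (x y : Fin n) :
    (snoc f a : Fin (n + 1) → α) ∘ swap x.castSucc y.castSucc = snoc (f ∘ swap x y) a := by
  funext i
  cases i using lastCases with
  | last => simp [swap_apply_of_ne_of_ne (castSucc_ne_last x).symm (castSucc_ne_last y).symm]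
  | cast i => rw [Function.comp_apply, (castSucc_injective n).swap_apply]; simp

theorem snoc_snoc_comp_swap (f : Fin n → α) (a b : α) :
    (snoc (snoc f a) b : Fin (n + 2) → α) ∘ swap (last n).castSucc (last (n + 1)) =
      snoc (snoc f b) a := by
  funext i
  cases i using lastCases with
  | last => simp
  | cast i =>
    cases i using lastCases with
    | last => simp
    | cast i => simp [swap_apply_of_ne_of_ne]

end Fin

namespace Omega

variable {S : Type*} (op : S → S → S)

theorem snoc_snoc {k : ℕ} (u : Fin k → S) (a b : S) :
    Omega op (k + 1) (Fin.snoc (Fin.snoc u a) b) =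
      op (Omega op k (Fin.snoc u a)) (Omega op k (Fin.snoc u b)) := by
  rw [Omega]
  congr 2 <;> funext i
  · simp
  · cases i using Fin.lastCases with
    | last => simp
    | cast i => simp

def symmetries (k : ℕ) : Submonoid (Perm (Fin (k + 1))) where
  carrier := {σ | ∀ t, Omega op k (t ∘ σ) = Omega op k t}
  one_mem' _ := rfl
  mul_mem' {σ τ} hσ hτ t := by
    rw [Perm.coe_mul, ← Function.comp_assoc]
    exact (hτ _).trans (hσ t)

variable {op}

theorem swap_castSucc_castSucc_mem {k : ℕ} {x y : Fin k}
    (h : swap x.castSucc y.castSucc ∈ symmetries op k) :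
    swap x.castSucc.castSucc y.castSucc.castSucc ∈ symmetries op (k + 1) := by
  intro t
  rw [← Fin.snoc_init_self t, ← Fin.snoc_init_self (Fin.init t), Fin.snoc_comp_swap_castSucc,
    Fin.snoc_comp_swap_castSucc, snoc_snoc, snoc_snoc, ← Fin.snoc_comp_swap_castSucc,
    ← Fin.snoc_comp_swap_castSucc, h, h]

theorem swap_last_two_castSucc_mem
    (hcs : ∀ s t u : S, op (op s t) (op s u) = op (op t s) (op t u)) (k : ℕ) :
    swap (Fin.last k).castSucc.castSucc (Fin.last (k + 1)).castSucc ∈ symmetries op (k + 2) := by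
  intro t
  rw [← Fin.snoc_init_self t, ← Fin.snoc_init_self (Fin.init t),
    ← Fin.snoc_init_self (Fin.init (Fin.init t)), Fin.snoc_comp_swap_castSucc,
    Fin.snoc_snoc_comp_swap]
  simp only [snoc_snoc]
  exact hcs _ _ _

theorem swap_castSucc_last_mem
    (hcs : ∀ s t u : S, op (op s t) (op s u) = op (op t s) (op t u)) {k : ℕ}
    (hlift : ∀ a b : Fin k,
      swap a.castSucc.castSucc b.castSucc.castSucc ∈ symmetries op (k + 1))
    (a : Fin k) : swap a.castSucc.castSucc (Fin.last k).castSucc ∈ symmetries op (k + 1) := by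
  cases k with
  | zero => exact a.elim0
  | succ m =>
    rcases a.eq_castSucc_or_eq_last with ⟨b, rfl⟩ | rfl
    · have hlast_prev : (Fin.last (m + 1)).castSucc ≠ (Fin.last m).castSucc.castSucc :=
        (Fin.castSucc_injective _).ne (Fin.castSucc_lt_last _).ne'
      have hlast_b : (Fin.last (m + 1)).castSucc ≠ b.castSucc.castSucc.castSucc :=
        (Fin.castSucc_injective _).ne (Fin.castSucc_lt_last _).ne'
      rw [← swap_mul_swap_mul_swap hlast_prev hlast_b, swap_comm _ (Fin.last m).castSucc.castSucc]
      exact mul_mem (mul_mem (hlift _ _) (swap_last_two_castSucc_mem hcs m)) (hlift _ _)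
    · exact swap_last_two_castSucc_mem hcs m

theorem swap_castSucc_mem (hcs : ∀ s t u : S, op (op s t) (op s u) = op (op t s) (op t u)) :
    ∀ (k : ℕ) (x y : Fin k), swap x.castSucc y.castSucc ∈ symmetries op k
  | 0, x, _ => x.elim0
  | k + 1, x, y => by
    have hlift (a b : Fin k) :
        swap a.castSucc.castSucc b.castSucc.castSucc ∈ symmetries op (k + 1) :=
      swap_castSucc_castSucc_mem (swap_castSucc_mem hcs k a b)
    rcases x.eq_castSucc_or_eq_last with ⟨a, rfl⟩ | rfl <;>
      rcases y.eq_castSucc_or_eq_last with ⟨b, rfl⟩ | rfl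
    · exact hlift a b
    · exact swap_castSucc_last_mem hcs hlift a
    · rw [swap_comm]
      exact swap_castSucc_last_mem hcs hlift b
    · rw [swap_self]
      exact one_mem _

end Omega

theorem Omega_perm_invariant_general {S : Type*} (op : S → S → S)
    (hcs : ∀ s t u : S, op (op s t) (op s u) = op (op t s) (op t u))
    (k : ℕ) (t : Fin (k + 1) → S) (σ : Equiv.Perm (Fin (k + 1)))
    (hσ : σ (Fin.last k) = Fin.last k) :
    Omega op k (t ∘ σ) = Omega op k t := by
  have hswap (x y : Fin (k + 1)) (hx : x ≠ Fin.last k) (hy : y ≠ Fin.last k) :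
      swap x y ∈ Omega.symmetries op k := by
    obtain ⟨a, rfl⟩ := Fin.exists_castSucc_eq.mpr hx
    obtain ⟨b, rfl⟩ := Fin.exists_castSucc_eq.mpr hy
    exact Omega.swap_castSucc_mem hcs k a b
  exact Perm.mem_of_swap_mem_of_apply_eq hswap hσ t

/-- In a cycle set, `Ω_k` is invariant under any permutation of the first `k-1` entries
(i.e. any permutation fixing the last entry). -/
theorem Omega_perm_invariant {S : Type*} (op : S → S → S)
    (hbij : ∀ s : S, Function.Bijective (op s))
    (hcs : ∀ s t u : S, op (op s t) (op s u) = op (op t s) (op t u))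
    (k : ℕ) (t : Fin (k + 1) → S) (σ : Equiv.Perm (Fin (k + 1)))
    (hσ : σ (Fin.last k) = Fin.last k) :
    Omega op k (t ∘ σ) = Omega op k t :=
  Omega_perm_invariant_general op hcs k t σ hσ
end

section
/- In a cycle set S, for any fixed t_1,...,t_k ∈ S, the map s ↦ Ω_{k+1}(t_1,...,t_k,s) is a bijection of S. -/
/-! Unfolding `Ω_{k+2}(t_1,…,t_{k+1},s) = Ω_{k+1}(t_1,…,t_{k+1}) * Ω_{k+1}(t_1,…,t_k,s)` shows that
`s ↦ Ω_{k+2}(t_1,…,t_{k+1},s)` is the map `s ↦ Ω_{k+1}(t_1,…,t_k,s)` followed by a left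
multiplication, so bijectivity follows by induction on `k`. -/

theorem Omega_succ_snoc {S : Type*} (op : S → S → S) (k : ℕ) (t : Fin (k + 1) → S) (s : S) :
    Omega op (k + 1) (Fin.snoc t s) = op (Omega op k t) (Omega op k (Fin.snoc (Fin.init t) s)) := by
  have hinit : (fun i : Fin (k + 1) => (Fin.snoc t s : Fin (k + 2) → S) i.castSucc) = t :=
    funext fun i => Fin.snoc_castSucc ..
  have hlast : (fun i : Fin (k + 1) =>
      if i = Fin.last k then (Fin.snoc t s : Fin (k + 2) → S) (Fin.last (k + 1))
      else (Fin.snoc t s : Fin (k + 2) → S) i.castSucc) = Fin.snoc (Fin.init t) s := by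
    funext i
    cases i using Fin.lastCases with
    | last => simp
    | cast j => simp [(Fin.castSucc_lt_last j).ne, Fin.init]
  rw [Omega, hinit, hlast]

theorem Omega_last_bijective_general {S : Type*} (op : S → S → S)
    (hbij : ∀ s : S, Function.Bijective (op s))
    (k : ℕ) (t : Fin k → S) :
    Function.Bijective (fun s : S => Omega op k (Fin.snoc t s)) := by
  induction k with
  | zero => exact Function.bijective_id
  | succ k ih =>
    have hcomp : (fun s => Omega op (k + 1) (Fin.snoc t s))
        = op (Omega op k t) ∘ fun s => Omega op k (Fin.snoc (Fin.init t) s) :=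
      funext (Omega_succ_snoc op k t)
    rw [hcomp]
    exact (hbij _).comp (ih _)

/-- In a cycle set, for fixed `t_1, …, t_k`, the map `s ↦ Ω_{k+1}(t_1,…,t_k,s)`
is a bijection of `S`. -/
theorem Omega_last_bijective {S : Type*} (op : S → S → S)
    (hbij : ∀ s : S, Function.Bijective (op s))
    (hcs : ∀ s t u : S, op (op s t) (op s u) = op (op t s) (op t u))
    (k : ℕ) (t : Fin k → S) :
    Function.Bijective (fun s : S => Omega op k (Fin.snoc t s)) :=
  Omega_last_bijective_general op hbij k t
end

section
/- In the structure monoid M of a cycle set S, the element Π_k(t_1,...,t_k) = Ω_1(t_1)·Ω_2(t_1,t_2)·...·Ω_k(t_1,...,t_k) is invariant under any permutation of the entries (t_1,...,t_k). -/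
/-- Dehornoy's `Π` expression: `PiExpr op ι k t = ι(Ω_1(t_1)) ⋯ ι(Ω_k(t_1,…,t_k))`. -/
def PiExpr {S M : Type*} [Monoid M] (op : S → S → S) (ι : S → M) :
    (k : ℕ) → (Fin k → S) → M
  | 0, _ => 1
  | k + 1, t => PiExpr op ι k (fun i => t i.castSucc) * ι (Omega op k t)

/-- The defining relations of the structure monoid: `s (s*t) = t (t*s)`. -/
def csRel {S : Type*} (op : S → S → S) (a b : FreeMonoid S) : Prop :=
  ∃ s t : S, a = FreeMonoid.of s * FreeMonoid.of (op s t) ∧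
    b = FreeMonoid.of t * FreeMonoid.of (op t s)

/-- The structure monoid `⟨S ∣ s(s*t) = t(t*s)⟩⁺` of a cycle set. -/
abbrev StructureMonoid {S : Type*} (op : S → S → S) := (conGen (csRel op)).Quotient

/-- The canonical generators of the structure monoid. -/
def mkM {S : Type*} (op : S → S → S) (s : S) : StructureMonoid op :=
  (conGen (csRel op)).mk' (FreeMonoid.of s)

/-!
Adjacent transpositions generate the symmetric group, so only they need to be checked. Since
`Ω_{n+1}(…, x, y) = Ω_n(…, x) * Ω_n(…, y)`, the expression `Ω_{n+1}` is symmetric in all but its last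
entry: swaps among the first `n - 1` entries are absorbed by induction, and exchanging the entries
`n - 1` and `n` is the cycle set identity `(s*t)*(s*u) = (t*s)*(t*u)`. For `Π_{k+1} = Π_k · Ω_{k+1}`
the same induction leaves only the exchange of the last two entries, which is the defining relation
`s (s*t) = t (t*s)` of the structure monoid.
-/

open Equiv

namespace Fin

variable {α β : Type*}

theorem comp_perm_invariant_of_swap_castSucc_succ {n : ℕ} (F : (Fin (n + 1) → α) → β)
    (hswap : ∀ (i : Fin n) (u : Fin (n + 1) → α), F (u ∘ swap i.castSucc i.succ) = F u)
    (σ : Perm (Fin (n + 1))) (u : Fin (n + 1) → α) : F (u ∘ σ) = F u := by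
  have hσ : σ ∈ Submonoid.closure (Set.range fun i : Fin n ↦ swap i.castSucc i.succ) := by
    rw [Perm.mclosure_swap_castSucc_succ]; trivial
  induction hσ using Submonoid.closure_induction generalizing u with
  | mem _ hi => obtain ⟨i, rfl⟩ := hi; exact hswap i u
  | one => rfl
  | mul σ τ _ _ hσ hτ => exact (hτ (u ∘ σ)).trans (hσ u)

theorem snoc_comp_swap_castSucc_s6 {n : ℕ} (v : Fin n → α) (x : α) (i j : Fin n) :
    snoc v x ∘ swap i.castSucc j.castSucc = snoc (v ∘ swap i j) x := by
  funext p
  induction p using lastCases with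
  | last =>
    simp [swap_apply_of_ne_of_ne (castSucc_lt_last i).ne' (castSucc_lt_last j).ne']
  | cast p => simp [(castSucc_injective n).swap_apply]

theorem snoc_snoc_comp_swap_last {n : ℕ} (w : Fin n → α) (x y : α) :
    snoc (snoc w x) y ∘ swap (last n).castSucc (last (n + 1)) = snoc (snoc w y) x := by
  funext p
  induction p using lastCases with
  | last => simp
  | cast p =>
    induction p using lastCases with
    | last => simp
    | cast p =>
      rw [Function.comp_apply, swap_apply_of_ne_of_ne
        ((castSucc_injective _).ne_iff.mpr (castSucc_lt_last p).ne) (castSucc_lt_last _).ne]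
      simp

theorem comp_perm_invariant_of_snoc {n : ℕ} (F : (Fin (n + 2) → α) → β)
    (hinit : ∀ (v : Fin (n + 1) → α) (x : α) (σ : Perm (Fin (n + 1))),
      F (snoc (v ∘ σ) x) = F (snoc v x))
    (hlast : ∀ (w : Fin n → α) (x y : α), F (snoc (snoc w x) y) = F (snoc (snoc w y) x))
    (σ : Perm (Fin (n + 2))) (u : Fin (n + 2) → α) : F (u ∘ σ) = F u := by
  refine comp_perm_invariant_of_swap_castSucc_succ F (fun i u ↦ ?_) σ u
  rw [← snoc_init_self u]
  induction i using lastCases with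
  | last =>
    rw [← snoc_init_self (init u), succ_last, snoc_snoc_comp_swap_last]
    exact hlast _ _ _
  | cast j =>
    rw [succ_castSucc, snoc_comp_swap_castSucc_s6]
    exact hinit _ _ _

theorem comp_perm_eq_self_of_le_one {n : ℕ} (hn : n ≤ 1) (u : Fin n → α) (σ : Perm (Fin n)) :
    u ∘ σ = u := by
  have := subsingleton_iff_le_one.mpr hn
  funext i
  rw [Function.comp_apply, Subsingleton.elim (σ i) i]

end Fin

open Fin

section CycleSet

variable {S : Type*} (op : S → S → S)

theorem Omega_snoc_snoc {k : ℕ} (u : Fin k → S) (x y : S) :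
    Omega op (k + 1) (snoc (snoc u x) y) =
      op (Omega op k (snoc u x)) (Omega op k (snoc u y)) := by
  simp only [Omega, snoc_castSucc]
  congr 2
  funext i
  induction i using lastCases with
  | last => simp
  | cast i => simp [(castSucc_lt_last i).ne]

theorem PiExpr_snoc {M : Type*} [Monoid M] (ι : S → M) {k : ℕ} (u : Fin k → S) (x : S) :
    PiExpr op ι (k + 1) (snoc u x) = PiExpr op ι k u * ι (Omega op k (snoc u x)) := by
  simp only [PiExpr, snoc_castSucc]

variable {op}

theorem Omega_snoc_comp_perm (hcs : ∀ s t u : S, op (op s t) (op s u) = op (op t s) (op t u))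
    (n : ℕ) (v : Fin n → S) (x : S) (σ : Perm (Fin n)) :
    Omega op n (snoc (v ∘ σ) x) = Omega op n (snoc v x) := by
  induction n generalizing x with
  | zero => rw [comp_perm_eq_self_of_le_one (by omega)]
  | succ m ih =>
    cases m with
    | zero => rw [comp_perm_eq_self_of_le_one le_rfl]
    | succ l =>
      refine comp_perm_invariant_of_snoc (fun v ↦ Omega op (l + 2) (snoc v x)) ?_ ?_ σ v
      · intro v y τ
        simp only [Omega_snoc_snoc, ih]
      · intro w y z
        simp only [Omega_snoc_snoc]
        exact (hcs _ _ _).symm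

theorem PiExpr_comp_perm {M : Type*} [Monoid M] {ι : S → M}
    (hcs : ∀ s t u : S, op (op s t) (op s u) = op (op t s) (op t u))
    (hrel : ∀ s t : S, ι s * ι (op s t) = ι t * ι (op t s))
    (k : ℕ) (u : Fin k → S) (σ : Perm (Fin k)) :
    PiExpr op ι k (u ∘ σ) = PiExpr op ι k u := by
  induction k with
  | zero => rw [comp_perm_eq_self_of_le_one (by omega)]
  | succ m ih =>
    cases m with
    | zero => rw [comp_perm_eq_self_of_le_one le_rfl]
    | succ l =>
      refine comp_perm_invariant_of_snoc (PiExpr op ι (l + 2)) ?_ ?_ σ u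
      · intro v x τ
        rw [PiExpr_snoc, PiExpr_snoc, ih, Omega_snoc_comp_perm hcs]
      · intro w x y
        simp only [PiExpr_snoc, Omega_snoc_snoc, mul_assoc, hrel]

end CycleSet

theorem mkM_mul_mkM_op {S : Type*} (op : S → S → S) (s t : S) :
    mkM op s * mkM op (op s t) = mkM op t * mkM op (op t s) := by
  simp only [mkM, ← map_mul]
  exact (Con.eq _).mpr (ConGen.Rel.of _ _ ⟨s, t, rfl, rfl⟩)

theorem PiExpr_perm_invariant_general {S : Type*} (op : S → S → S)
    (hcs : ∀ s t u : S, op (op s t) (op s u) = op (op t s) (op t u))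
    (k : ℕ) (t : Fin k → S) (σ : Equiv.Perm (Fin k)) :
    PiExpr op (mkM op) k (t ∘ σ) = PiExpr op (mkM op) k t :=
  PiExpr_comp_perm hcs (mkM_mul_mkM_op op) k t σ

/-- In the structure monoid of a cycle set, `Π_k(t_1,…,t_k)` is invariant under any
permutation of the entries. -/
theorem PiExpr_perm_invariant {S : Type*} (op : S → S → S)
    (hbij : ∀ s : S, Function.Bijective (op s))
    (hcs : ∀ s t u : S, op (op s t) (op s u) = op (op t s) (op t u))
    (k : ℕ) (t : Fin k → S) (σ : Equiv.Perm (Fin k)) :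
    PiExpr op (mkM op) k (t ∘ σ) = PiExpr op (mkM op) k t :=
  PiExpr_perm_invariant_general op hcs k t σ
end

section
/- Every element f of the structure monoid M of a finite cycle set S admits a Π-expression: there exist k ≥ 0 and t_1,...,t_k ∈ S with f = Π_k(t_1,...,t_k). -/
/-- The map `u ↦ Ω_{k+1}(g₁,…,g_k,u)` is a bijection of `S`. -/
lemma omega_last_bijective {S : Type*} (op : S → S → S)
    (hbij : ∀ s : S, Function.Bijective (op s)) :
    ∀ (k : ℕ) (g : Fin (k + 1) → S),
      Function.Bijective (fun u => Omega op k (fun i => if i = Fin.last k then u else g i))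
  | 0, g => by
      have : (fun u => Omega op 0 (fun i => if i = Fin.last 0 then u else g i)) = id := by
        funext u
        show Omega op 0 _ = u
        simp only [Omega]
        exact if_pos (Fin.fin_one_eq_zero _).symm
      rw [this]
      exact Function.bijective_id
  | k + 1, g => by
      have h1 := omega_last_bijective op hbij k (fun i => g i.castSucc)
      have key : (fun u => Omega op (k + 1)
            (fun i => if i = Fin.last (k + 1) then u else g i)) =
          (fun x => op (Omega op k (fun i => g i.castSucc)) x) ∘
            (fun u => Omega op k
              (fun i => if i = Fin.last k then u else g i.castSucc)) := by
        funext u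
        show Omega op (k + 1) _ = _
        rw [Omega]
        congr 1
        · congr 1
          funext i
          simp [(Fin.castSucc_lt_last i).ne]
        · congr 1
          funext i
          by_cases h : i = Fin.last k
          · simp [h]
          · simp [h, (Fin.castSucc_lt_last i).ne]
      rw [key]
      exact (hbij _).comp h1

lemma exists_omega_eq {S : Type*} (op : S → S → S)
    (hbij : ∀ s : S, Function.Bijective (op s)) (k : ℕ) (t : Fin k → S) (s : S) :
    ∃ t' : Fin (k + 1) → S, (∀ i : Fin k, t' i.castSucc = t i) ∧ Omega op k t' = s := by
  obtain ⟨u, hu⟩ := (omega_last_bijective op hbij k (Fin.snoc t s : Fin (k + 1) → S)).surjective s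
  refine ⟨fun i => if i = Fin.last k then u
    else (Fin.snoc t s : Fin (k + 1) → S) i, fun i => ?_, ?_⟩
  · show (if i.castSucc = Fin.last k then u else (Fin.snoc t s : Fin (k + 1) → S) i.castSucc) = t i
    rw [if_neg (Fin.castSucc_lt_last i).ne, Fin.snoc_castSucc]
  · exact hu

/-- Every element of the structure monoid of a finite cycle set admits a `Π`-expression. -/
theorem exists_PiExpr {S : Type*} [Fintype S] (op : S → S → S)
    (hbij : ∀ s : S, Function.Bijective (op s))
    (hcs : ∀ s t u : S, op (op s t) (op s u) = op (op t s) (op t u))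
    (f : StructureMonoid op) :
    ∃ (k : ℕ) (t : Fin k → S), f = PiExpr op (mkM op) k t := by
  obtain ⟨w, rfl⟩ := (conGen (csRel op)).mk'_surjective f
  suffices h : ∀ l : List S, ∃ (k : ℕ) (t : Fin k → S),
      (conGen (csRel op)).mk' (FreeMonoid.ofList l) = PiExpr op (mkM op) k t by
    simpa using h w.toList
  intro l
  induction l using List.reverseRecOn with
  | nil =>
      refine ⟨0, Fin.elim0, ?_⟩
      show (conGen (csRel op)).mk' 1 = _
      rw [map_one]
      rfl
  | append_singleton l a ih =>
      obtain ⟨k, t, ht⟩ := ih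
      obtain ⟨t', h1, h2⟩ := exists_omega_eq op hbij k t a
      refine ⟨k + 1, t', ?_⟩
      rw [FreeMonoid.ofList_append, map_mul, ht]
      show _ = PiExpr op (mkM op) k (fun i => t' i.castSucc) * mkM op (Omega op k t')
      have htt : (fun i => t' i.castSucc) = t := funext h1
      rw [htt, h2]
      congr 1
end

section
/- The map Θ sending a generator s_i of a finite cycle set to the monomial matrix D_{s_i} P_{ψ(s_i)}, where D_{s_i} = diag(1,...,q,...,1) with q in position i and ψ(s_i)(j) is determined by s_i * s_j = s_{ψ(s_i)(j)}, respects the defining relations Θ(s)Θ(s*t) = Θ(t)Θ(t*s), hence extends to a monoid homomorphism from the structure monoid to monomial matrices over ℚ[q]. -/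
/-- The permutation matrix of `σ`: row `i` has a `1` in column `σ i`. -/
def Pmat {ι : Type*} [DecidableEq ι] (R : Type*) [Semiring R] (σ : Equiv.Perm ι) :
    Matrix ι ι R := Matrix.of fun i j => if j = σ i then 1 else 0

/-- The diagonal matrix `D_s = diag(1,…,q,…,1)` with `q` in position `s`. -/
noncomputable def Dmat {S : Type*} [DecidableEq S] (s : S) : Matrix S S (Polynomial ℚ) :=
  Matrix.diagonal fun t => if t = s then Polynomial.X else 1

/-- The permutation `ψ(s) : t ↦ s * t` attached to an element of a cycle set. -/
noncomputable def psi {S : Type*} (op : S → S → S) (hbij : ∀ s : S, Function.Bijective (op s))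
    (s : S) : Equiv.Perm S := Equiv.ofBijective (op s) (hbij s)

/-- The monomial matrix `Θ(s) = D_s P_{ψ(s)}` associated to a generator. -/
noncomputable def theta {S : Type*} [Fintype S] [DecidableEq S] (op : S → S → S)
    (hbij : ∀ s : S, Function.Bijective (op s)) (s : S) : Matrix S S (Polynomial ℚ) :=
  Dmat s * Pmat (Polynomial ℚ) (psi op hbij s)

/-!
Θ(s) is monomial: its row `i` has the single nonzero entry `q^[i = s]` in column `s * i`.
Hence row `i` of `Θ(s) Θ(s * t)` has the single entry `q^([i = s] + [i = t])`, in column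
`(s * t) * (s * i)`, because `(s * i = s * t) ↔ (i = t)`. The weight is symmetric in `s, t`, and
so is the column by the cycle set identity `(s * t) * (s * i) = (t * s) * (t * i)`.
-/

section StructureMonoid

variable {S M : Type*} [Monoid M] (op : S → S → S)

def StructureMonoid.lift (f : S → M) (hf : ∀ s t, f s * f (op s t) = f t * f (op t s)) :
    StructureMonoid op →* M :=
  Con.lift _ (FreeMonoid.lift f) <| Con.conGen_le.2 <| by
    rintro _ _ ⟨s, t, rfl, rfl⟩
    simpa only [Con.ker_rel, map_mul, FreeMonoid.lift_eval_of] using hf s t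

theorem StructureMonoid.lift_mkM (f : S → M)
    (hf : ∀ s t, f s * f (op s t) = f t * f (op t s)) (s : S) :
    StructureMonoid.lift op f hf (mkM op s) = f s :=
  rfl

end StructureMonoid

section Theta

variable {S : Type*} [Fintype S] [DecidableEq S] (op : S → S → S)
  (hbij : ∀ s : S, Function.Bijective (op s))

theorem theta_apply (s i j : S) :
    theta op hbij s i j = if j = op s i then (if i = s then Polynomial.X else 1) else 0 := by
  simp only [theta, Dmat, Pmat, psi, Matrix.diagonal_mul, Matrix.of_apply,
    Equiv.ofBijective_apply]
  split <;> simp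

theorem theta_mul_theta_apply (s r i j : S) :
    (theta op hbij s * theta op hbij r) i j
      = (if i = s then Polynomial.X else 1) * (if op s i = r then Polynomial.X else 1)
          * (if j = op r (op s i) then 1 else 0) := by
  rw [Matrix.mul_apply, Finset.sum_eq_single (op s i)]
  · simp [theta_apply]
  · intro k _ hk
    simp [theta_apply, hk]
  · simp

theorem theta_mul_theta_op_apply (s t i j : S) :
    (theta op hbij s * theta op hbij (op s t)) i j
      = (if i = s then Polynomial.X else 1) * (if i = t then Polynomial.X else 1)
          * (if j = op (op s t) (op s i) then 1 else 0) := by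
  simp only [theta_mul_theta_apply, (hbij s).injective.eq_iff]

theorem theta_mul_theta_op_comm
    (hcs : ∀ s t u : S, op (op s t) (op s u) = op (op t s) (op t u)) (s t : S) :
    theta op hbij s * theta op hbij (op s t) = theta op hbij t * theta op hbij (op t s) := by
  ext i j
  rw [theta_mul_theta_op_apply, theta_mul_theta_op_apply, hcs s t i,
    mul_comm (if i = s then _ else _)]

end Theta

/-- The map `Θ : s ↦ D_s P_{ψ(s)}` respects the defining relations of the structure
monoid, hence extends to a monoid homomorphism into monomial matrices over `ℚ[q]`. -/
theorem theta_extends_to_hom {S : Type*} [Fintype S] [DecidableEq S] (op : S → S → S)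
    (hbij : ∀ s : S, Function.Bijective (op s))
    (hcs : ∀ s t u : S, op (op s t) (op s u) = op (op t s) (op t u)) :
    (∀ s t : S, theta op hbij s * theta op hbij (op s t)
        = theta op hbij t * theta op hbij (op t s)) ∧
    ∃ Θ : StructureMonoid op →* Matrix S S (Polynomial ℚ),
      ∀ s : S, Θ (mkM op s) = theta op hbij s :=
  have hrel := theta_mul_theta_op_comm op hbij hcs
  ⟨hrel, StructureMonoid.lift op _ hrel, StructureMonoid.lift_mkM op _ hrel⟩
end

section
/- Under the monomial representation Θ of the structure monoid of a finite cycle set, Θ(Π_k(t_1,...,t_k)) has diagonal part D_{t_1}···D_{t_k} and its permutation ψ(Π_k(t_1,...,t_k)) satisfies ψ(Π_k(t_1,...,t_k))(s) = Ω_{k+1}(t_1,...,t_k,s) for all s ∈ S. -/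

lemma omega_snoc {S : Type*} (op : S → S → S) (k : ℕ) (t : Fin (k + 1) → S) (s : S) :
    Omega op (k + 1) (Fin.snoc t s) =
      op (Omega op k t) (Omega op k (Fin.snoc (fun i => t i.castSucc) s)) := by
  show op _ _ = _
  congr 1
  · congr 1; funext i; simp [Fin.snoc_castSucc]
  · congr 1
    funext i
    refine Fin.lastCases ?_ ?_ i
    · simp
    · intro j
      rw [if_neg (Fin.castSucc_lt_last j).ne, Fin.snoc_castSucc, Fin.snoc_castSucc]

lemma omega_snoc_bij {S : Type*} (op : S → S → S)
    (hbij : ∀ s : S, Function.Bijective (op s)) :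
    ∀ (k : ℕ) (t : Fin k → S), Function.Bijective (fun s => Omega op k (Fin.snoc t s)) := by
  intro k
  induction k with
  | zero =>
    intro t
    have h : (fun s => Omega op 0 (Fin.snoc t s)) = id := by
      funext s
      simp only [Omega, id_eq]
      exact Fin.snoc_last _ _
    rw [h]; exact Function.bijective_id
  | succ k ih =>
    intro t
    have h : (fun s => Omega op (k + 1) (Fin.snoc t s)) =
        (op (Omega op k t)) ∘
          (fun s => Omega op k (Fin.snoc (fun i : Fin k => (fun j => t j.castSucc) i) s)) := by
      funext s
      exact omega_snoc op k t s
    rw [h]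
    exact (hbij _).comp (ih _)

lemma permOf_mul_diag {S R : Type*} [Fintype S] [DecidableEq S] [CommSemiring R]
    (f : S → S) (d : S → R) :
    (Matrix.of fun i j : S => if j = f i then (1 : R) else 0) * Matrix.diagonal d =
      Matrix.diagonal (fun i => d (f i)) *
        Matrix.of (fun i j : S => if j = f i then (1 : R) else 0) := by
  ext i j
  rw [Matrix.mul_diagonal, Matrix.diagonal_mul]
  simp only [Matrix.of_apply]
  by_cases h : j = f i
  · subst h; ring
  · simp [h]

lemma permOf_mul_permOf {S R : Type*} [Fintype S] [DecidableEq S] [CommSemiring R]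
    (f g : S → S) :
    (Matrix.of fun i j : S => if j = f i then (1 : R) else 0) *
      (Matrix.of fun i j : S => if j = g i then (1 : R) else 0) =
      Matrix.of fun i j : S => if j = g (f i) then (1 : R) else 0 := by
  ext i j
  rw [Matrix.mul_apply]
  rw [Finset.sum_eq_single (f i)]
  · simp
  · intro b _ hb
    simp [hb]
  · simp

/-- Under the monomial representation, `Θ(Π_k(t_1,…,t_k))` has diagonal part
`D_{t_1} ⋯ D_{t_k}` and permutation part the matrix of `s ↦ Ω_{k+1}(t_1,…,t_k,s)`. -/
theorem theta_PiExpr {S : Type*} [Fintype S] [DecidableEq S] (op : S → S → S)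
    (hbij : ∀ s : S, Function.Bijective (op s))
    (hcs : ∀ s t u : S, op (op s t) (op s u) = op (op t s) (op t u))
    (Θ : StructureMonoid op →* Matrix S S (Polynomial ℚ))
    (hΘ : ∀ s : S, Θ (mkM op s) = theta op hbij s)
    (k : ℕ) (t : Fin k → S) :
    Θ (PiExpr op (mkM op) k t) =
      Matrix.diagonal (fun j => ∏ i : Fin k,
          if j = t i then (Polynomial.X : Polynomial ℚ) else 1) *
        Matrix.of (fun i j : S => if j = Omega op k (Fin.snoc t i) then 1 else 0) := by

  induction k with
  | zero =>
    have h1 : (Matrix.of fun i j : S =>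
        if j = Omega op 0 (Fin.snoc t i) then (1 : Polynomial ℚ) else 0) = 1 := by
      ext i j
      have h : Omega op 0 (Fin.snoc t i) = i := by
        simp only [Omega]
        exact Fin.snoc_last _ _
      simp [h, Matrix.one_apply, eq_comm]
    simp [PiExpr, h1]
  | succ k ih =>
    have step : PiExpr op (mkM op) (k + 1) t =
        PiExpr op (mkM op) k (fun i => t i.castSucc) * mkM op (Omega op k t) := rfl
    rw [step, map_mul, ih, hΘ, theta, Dmat, Pmat]
    have hpsi : (Matrix.of fun i j : S =>
        if j = (psi op hbij (Omega op k t)) i then (1 : Polynomial ℚ) else 0) =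
        Matrix.of fun i j : S => if j = op (Omega op k t) i then (1 : Polynomial ℚ) else 0 := by
      ext i j
      simp [psi, Equiv.ofBijective_apply]
    rw [hpsi]
    set f : S → S := fun s => Omega op k (Fin.snoc (fun i : Fin k => t i.castSucc) s) with hf
    have hP1 : (Matrix.of fun i j : S =>
        if j = Omega op k (Fin.snoc (fun i : Fin k => t i.castSucc) i) then (1 : Polynomial ℚ) else 0)
        = Matrix.of fun i j : S => if j = f i then (1 : Polynomial ℚ) else 0 := rfl
    rw [hP1]
    rw [show ∀ A B C D : Matrix S S (Polynomial ℚ), A * B * (C * D) = A * (B * C) * D by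
      intros; noncomm_ring]
    rw [permOf_mul_diag, ← mul_assoc, Matrix.diagonal_mul_diagonal, mul_assoc,
      permOf_mul_permOf]
    have hd : (fun i : S =>
        (∏ i1 : Fin k, if i = t i1.castSucc then (Polynomial.X : Polynomial ℚ) else 1) *
          if f i = Omega op k t then Polynomial.X else 1) =
        fun j : S => ∏ i : Fin (k + 1),
          if j = t i then (Polynomial.X : Polynomial ℚ) else 1 := by
      funext j
      have hinj := (omega_snoc_bij op hbij k (fun i : Fin k => t i.castSucc)).injective
      have hΩ : Omega op k t = f (t (Fin.last k)) := by
        show Omega op k t =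
          Omega op k (Fin.snoc (fun i : Fin k => t i.castSucc) (t (Fin.last k)))
        congr 1
        exact (Fin.snoc_init_self t).symm
      have hiff : (f j = Omega op k t) ↔ (j = t (Fin.last k)) := by
        rw [hΩ]
        exact ⟨fun h => hinj h, fun h => by rw [h]⟩
      rw [Fin.prod_univ_castSucc]
      congr 1
      by_cases h : j = t (Fin.last k)
      · rw [if_pos (hiff.mpr h), if_pos h]
      · rw [if_neg (fun hh => h (hiff.mp hh)), if_neg h]
    have hp : (fun i j : S =>
        if j = op (Omega op k t) (f i) then (1 : Polynomial ℚ) else 0) =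
        fun i j : S =>
          if j = Omega op (k + 1) (Fin.snoc t i) then (1 : Polynomial ℚ) else 0 := by
      funext i j
      rw [omega_snoc op k t i]
    rw [hd, hp]
end

section
/- Every tuple (c_1,...,c_n) of non-negative integers is realized as the coefficient-powers tuple of some element of the image of the structure monoid of a finite cycle set of size n under the monomial representation; i.e., there is an element of Θ(M) whose diagonal part is diag(q^{c_1},...,q^{c_n}). -/
/-!
Right multiplication of a monomial matrix `diag(d) P_σ` by a generator image
`Θ(s) = D_s P_{ψ(s)}` multiplies the entry `d_j` with `σ j = s` by `q` and leaves the others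
alone. Taking `s = σ t` therefore raises the exponent of `q` in slot `t` by one, so any
exponent tuple is reached one unit at a time, starting from `Θ 1 = 1`.
-/

lemma Pmat_one {ι : Type*} [DecidableEq ι] (R : Type*) [Semiring R] :
    Pmat R (1 : Equiv.Perm ι) = 1 := by
  ext i j
  simp [Pmat, Matrix.one_apply, eq_comm]

section Monomial

variable {ι R : Type*} [DecidableEq ι] [Fintype ι] [Semiring R]

lemma Pmat_mul_Pmat (σ τ : Equiv.Perm ι) : Pmat R σ * Pmat R τ = Pmat R (σ.trans τ) := by
  ext i j
  simp only [Pmat, Matrix.mul_apply, Matrix.of_apply]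
  rw [Finset.sum_eq_single (σ i)] <;> simp +contextual; rfl

lemma Pmat_mul_diagonal (σ : Equiv.Perm ι) (d : ι → R) :
    Pmat R σ * Matrix.diagonal d = Matrix.diagonal (fun i => d (σ i)) * Pmat R σ := by
  ext i j
  simp only [Pmat, Matrix.mul_apply, Matrix.of_apply, Matrix.diagonal_apply, ite_mul, mul_ite,
    one_mul, zero_mul, mul_one, mul_zero]
  rw [Finset.sum_eq_single (σ i), Finset.sum_eq_single i] <;> simp +contextual [eq_comm]

lemma diagonal_mul_Pmat_mul_diagonal_mul_Pmat (d e : ι → R) (σ τ : Equiv.Perm ι) :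
    Matrix.diagonal d * Pmat R σ * (Matrix.diagonal e * Pmat R τ) =
      Matrix.diagonal (fun i => d i * e (σ i)) * Pmat R (σ.trans τ) := by
  rw [mul_assoc, ← mul_assoc (Pmat R σ), Pmat_mul_diagonal, mul_assoc, Pmat_mul_Pmat,
    ← mul_assoc, Matrix.diagonal_mul_diagonal]

end Monomial

section StructureMonoid

open Polynomial

variable {S : Type*} [Fintype S] [DecidableEq S] {op : S → S → S}
  {hbij : ∀ s : S, Function.Bijective (op s)}

lemma diagonal_mul_Pmat_mul_theta (d : S → ℚ[X]) (σ : Equiv.Perm S) (s : S) :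
    Matrix.diagonal d * Pmat ℚ[X] σ * theta op hbij s =
      Matrix.diagonal (fun j => d j * if σ j = s then X else 1) *
        Pmat ℚ[X] (σ.trans (psi op hbij s)) :=
  diagonal_mul_Pmat_mul_diagonal_mul_Pmat _ _ _ _

lemma exists_map_eq_diagonal_X_pow_count_mul_Pmat {Θ : StructureMonoid op →* Matrix S S ℚ[X]}
    (hΘ : ∀ s : S, Θ (mkM op s) = theta op hbij s) (m : Multiset S) :
    ∃ (f : StructureMonoid op) (σ : Equiv.Perm S),
      Θ f = Matrix.diagonal (fun j => (X : ℚ[X]) ^ m.count j) * Pmat ℚ[X] σ := by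
  induction m using Multiset.induction with
  | empty => exact ⟨1, 1, by simp [Pmat_one]⟩
  | cons t m ih =>
    obtain ⟨f, σ, hf⟩ := ih
    refine ⟨f * mkM op (σ t), σ.trans (psi op hbij (σ t)), ?_⟩
    rw [map_mul, hf, hΘ, diagonal_mul_Pmat_mul_theta]
    congr 2
    funext j
    by_cases hj : j = t
    · simp [hj, pow_succ]
    · simp [hj, σ.injective.eq_iff]

end StructureMonoid

theorem exists_coefficient_powers_general {S : Type*} [Fintype S] [DecidableEq S] (op : S → S → S)
    (hbij : ∀ s : S, Function.Bijective (op s))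
    (Θ : StructureMonoid op →* Matrix S S (Polynomial ℚ))
    (hΘ : ∀ s : S, Θ (mkM op s) = theta op hbij s)
    (c : S → ℕ) :
    ∃ (f : StructureMonoid op) (σ : Equiv.Perm S),
      Θ f = Matrix.diagonal (fun j => (Polynomial.X : Polynomial ℚ) ^ c j) *
        Pmat (Polynomial ℚ) σ := by
  simpa using exists_map_eq_diagonal_X_pow_count_mul_Pmat hΘ
    (Finsupp.toMultiset (Finsupp.equivFunOnFinite.symm c))

/-- Every tuple of non-negative integers is realized as the coefficient-powers tuple of
some element of the image of the structure monoid under the monomial representation. -/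
theorem exists_coefficient_powers {S : Type*} [Fintype S] [DecidableEq S] (op : S → S → S)
    (hbij : ∀ s : S, Function.Bijective (op s))
    (hcs : ∀ s t u : S, op (op s t) (op s u) = op (op t s) (op t u))
    (Θ : StructureMonoid op →* Matrix S S (Polynomial ℚ))
    (hΘ : ∀ s : S, Θ (mkM op s) = theta op hbij s)
    (c : S → ℕ) :
    ∃ (f : StructureMonoid op) (σ : Equiv.Perm S),
      Θ f = Matrix.diagonal (fun j => (Polynomial.X : Polynomial ℚ) ^ c j) *
        Pmat (Polynomial ℚ) σ :=
  exists_coefficient_powers_general op hbij Θ hΘ c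
end

section
/- The image of the structure group of a finite cycle set under the monomial representation is permutation-free: the only permutation matrix it contains is the identity. -/
/-- The defining relators of the structure group: `s (s*t) (t (t*s))⁻¹`. -/
def csGrpRels {S : Type*} (op : S → S → S) : Set (FreeGroup S) :=
  { r | ∃ s t : S, r = FreeGroup.of s * FreeGroup.of (op s t) *
      (FreeGroup.of t * FreeGroup.of (op t s))⁻¹ }

/-- The structure group `⟨S ∣ s(s*t) = t(t*s)⟩` of a cycle set. -/
abbrev StructureGroup {S : Type*} (op : S → S → S) := PresentedGroup (csGrpRels op)

/-- The diagonal matrix `D_s` over Laurent polynomials, with `q` in position `s`. -/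
noncomputable def DmatL {S : Type*} [DecidableEq S] (s : S) :
    Matrix S S (LaurentPolynomial ℚ) :=
  Matrix.diagonal fun t => if t = s then LaurentPolynomial.T 1 else 1

/-!
Θ factors as a homomorphism `Φ` into the group of pairs `(v, π) ∈ ℤ^S × Sym(S)` followed by the
faithful map `(v, π) ↦ diag(T^v) P_π`. Permutation matrices correspond to `v = 0`, so it suffices
to show that an element of the image of `Φ` with exponent vector `0` is trivial.

Positive elements (products of generators) are determined by their exponent vectors: each is a
word whose letters are counted by `v`, and swapping two adjacent letters of such a word is an
instance of the defining relations. The relations also give the Ore condition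
`y⁻¹ x = x' y'⁻¹` for positive `x, y`, so every element of the image is a fraction `x y⁻¹` of
positive elements, and multiplying both on the right by a positive element we may assume that
`y` has a constant exponent vector `N`. If `z = x y⁻¹` has exponent vector `0`, then `x = z y`
has exponent vector `N ∘ π = N`, so `x = y` and `z = 1`.
-/

theorem List.exists_count_eq {α : Type*} [Fintype α] [DecidableEq α] (f : α → ℕ) :
    ∃ l : List α, ∀ a, l.count a = f a :=
  ⟨(Finsupp.equivFunOnFinite.symm f).toMultiset.toList, fun a => by
    rw [← Multiset.coe_count, Multiset.coe_toList, Finsupp.count_toMultiset]; rfl⟩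

theorem Submonoid.exists_eq_mul_inv_of_mem_closure {G : Type*} [Group G] (M : Submonoid G)
    (hore : ∀ x ∈ M, ∀ y ∈ M, ∃ x' ∈ M, ∃ y' ∈ M, y⁻¹ * x = x' * y'⁻¹) {g : G}
    (hg : g ∈ Subgroup.closure (M : Set G)) : ∃ x ∈ M, ∃ y ∈ M, g = x * y⁻¹ := by
  induction hg using Subgroup.closure_induction with
  | mem x hx => exact ⟨x, hx, 1, M.one_mem, by rw [inv_one, mul_one]⟩
  | one => exact ⟨1, M.one_mem, 1, M.one_mem, by rw [inv_one, mul_one]⟩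
  | mul _ _ _ _ h₁ h₂ =>
    obtain ⟨x₁, hx₁, y₁, hy₁, rfl⟩ := h₁
    obtain ⟨x₂, hx₂, y₂, hy₂, rfl⟩ := h₂
    obtain ⟨x', hx', y', hy', hswap⟩ := hore x₂ hx₂ y₁ hy₁
    refine ⟨x₁ * x', M.mul_mem hx₁ hx', y₂ * y', M.mul_mem hy₂ hy', ?_⟩
    calc x₁ * y₁⁻¹ * (x₂ * y₂⁻¹) = x₁ * (y₁⁻¹ * x₂) * y₂⁻¹ := by group
      _ = x₁ * x' * (y₂ * y')⁻¹ := by rw [hswap]; group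
  | inv _ _ h =>
    obtain ⟨x, hx, y, hy, rfl⟩ := h
    exact ⟨y, hy, x, hx, by rw [mul_inv_rev, inv_inv]⟩

/-- `⟨v, π⟩` encodes the monomial matrix `diag(T^v) * P_π`, whose only nonzero entry in
row `i` is `T^(v i)`, in column `π i`. -/
@[ext] structure MonomialData (S : Type*) where
  exp : S → ℤ
  perm : Equiv.Perm S

namespace MonomialData

variable {S : Type*}

-- Since `P_π * P_ρ = P_(ρ * π)`, the permutations compose in reverse order.
instance : Mul (MonomialData S) := ⟨fun a b => ⟨a.exp + b.exp ∘ a.perm, b.perm * a.perm⟩⟩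
instance : One (MonomialData S) := ⟨⟨0, 1⟩⟩
instance : Inv (MonomialData S) := ⟨fun a => ⟨-a.exp ∘ ⇑a.perm⁻¹, a.perm⁻¹⟩⟩

@[simp] lemma exp_mul (a b : MonomialData S) : (a * b).exp = a.exp + b.exp ∘ a.perm := rfl
@[simp] lemma perm_mul (a b : MonomialData S) : (a * b).perm = b.perm * a.perm := rfl
@[simp] lemma exp_one : (1 : MonomialData S).exp = 0 := rfl
@[simp] lemma perm_one : (1 : MonomialData S).perm = 1 := rfl
@[simp] lemma exp_inv (a : MonomialData S) : a⁻¹.exp = -a.exp ∘ ⇑a.perm⁻¹ := rfl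
@[simp] lemma perm_inv (a : MonomialData S) : a⁻¹.perm = a.perm⁻¹ := rfl

instance : Group (MonomialData S) where
  mul_assoc a b c := by ext <;> simp [add_assoc, mul_assoc]
  one_mul a := by ext <;> simp
  mul_one a := by ext <;> simp
  inv_mul_cancel a := by ext <;> simp

section toMatrix

variable [Fintype S] [DecidableEq S] (R : Type*) [Semiring R]

noncomputable def toMatrix : MonomialData S →* Matrix S S (LaurentPolynomial R) where
  toFun a := Matrix.of fun i j => if j = a.perm i then LaurentPolynomial.T (a.exp i) else 0
  map_one' := by
    ext i j
    simp [Matrix.one_apply, eq_comm]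
  map_mul' a b := by
    refine Matrix.ext fun i j => ?_
    rw [Matrix.mul_apply, Finset.sum_eq_single (a.perm i) (fun k _ hk => by simp [hk])
      (fun h => absurd (Finset.mem_univ _) h)]
    simp only [Matrix.of_apply, if_true]
    by_cases hj : j = b.perm (a.perm i)
    · simp only [hj, if_true, exp_mul, perm_mul, Pi.add_apply, Function.comp_apply,
        Equiv.Perm.mul_apply, LaurentPolynomial.T_add]
    · simp [hj]

lemma toMatrix_apply (a : MonomialData S) (i j : S) :
    toMatrix R a i j = if j = a.perm i then LaurentPolynomial.T (a.exp i) else 0 := rfl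

lemma toMatrix_injective [Nontrivial R] : Function.Injective (toMatrix (S := S) R) := by
  intro a b h
  have hab (i : S) := congrFun (congrFun h i) (a.perm i)
  simp only [toMatrix_apply, if_true] at hab
  have hperm (i : S) : a.perm i = b.perm i := by
    by_contra hne
    have hi := hab i
    rw [if_neg hne] at hi
    exact (LaurentPolynomial.isUnit_T _).ne_zero hi
  refine MonomialData.ext (funext fun i => ?_) (Equiv.ext hperm)
  have hi := hab i
  rw [if_pos (hperm i)] at hi
  simpa using congrArg (fun f => f.coeff (b.exp i)) hi

lemma toMatrix_mk_zero (σ : Equiv.Perm S) : toMatrix R ⟨0, σ⟩ = Pmat _ σ := by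
  ext i j
  simp [toMatrix_apply, Pmat]

end toMatrix

section CycleSet

variable [DecidableEq S] {op : S → S → S}
  (hbij : ∀ s : S, Function.Bijective (op s))
  (hcs : ∀ s t u : S, op (op s t) (op s u) = op (op t s) (op t u))

variable (op) in
noncomputable def gen (s : S) : MonomialData S := ⟨Pi.single s 1, psi op hbij s⟩

@[simp] lemma exp_gen (s : S) : (gen op hbij s).exp = Pi.single s 1 := rfl
@[simp] lemma perm_gen_apply (s t : S) : (gen op hbij s).perm t = op s t := rfl

lemma toMatrix_gen [Fintype S] (s : S) :
    toMatrix ℚ (gen op hbij s) = DmatL s * Pmat (LaurentPolynomial ℚ) (psi op hbij s) := by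
  ext i j : 1
  by_cases hi : i = s <;>
    simp [toMatrix_apply, gen, DmatL, Pmat, Matrix.diagonal_mul, hi]

include hcs in
lemma gen_mul_gen_comm (s t : S) :
    gen op hbij s * gen op hbij (op s t) = gen op hbij t * gen op hbij (op t s) := by
  ext i
  · simp [Pi.single_apply, (hbij s).1.eq_iff, (hbij t).1.eq_iff, add_comm]
  · simp [hcs s t]

include hcs in
lemma lift_gen_eq_one_of_mem_csGrpRels :
    ∀ r ∈ csGrpRels op, FreeGroup.lift (gen op hbij) r = 1 := by
  rintro _ ⟨s, t, rfl⟩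
  simp only [map_mul, map_inv, FreeGroup.lift_apply_of]
  rw [mul_inv_eq_one, gen_mul_gen_comm hbij hcs]

variable (op) in
def positiveMonoid : Submonoid (MonomialData S) := Submonoid.closure (Set.range (gen op hbij))

-- Each letter is twisted by the permutation accumulated so far: then `exp` counts letters,
-- and swapping two adjacent letters is exactly the defining relation `gen_mul_gen_comm`.
variable (op) in
noncomputable def ofList : List S → MonomialData S
  | [] => 1
  | u :: l => ofList l * gen op hbij ((ofList l).perm u)

lemma exp_ofList (l : List S) : (ofList op hbij l).exp = fun i => (l.count i : ℤ) := by
  induction l with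
  | nil => rfl
  | cons u l ih =>
    ext i
    simp only [ofList, exp_mul, ih, exp_gen, Pi.add_apply, Function.comp_apply, Pi.single_apply,
      (ofList op hbij l).perm.injective.eq_iff, List.count_cons, beq_iff_eq]
    split_ifs <;> simp_all

include hcs in
lemma ofList_perm {l l' : List S} (h : l.Perm l') : ofList op hbij l = ofList op hbij l' := by
  induction h with
  | nil => rfl
  | cons u _ ih => rw [ofList, ofList, ih]
  | swap x y l =>
    simp only [ofList, mul_assoc, perm_mul, Equiv.Perm.mul_apply, perm_gen_apply]
    rw [gen_mul_gen_comm hbij hcs]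
  | trans _ _ ih₁ ih₂ => exact ih₁.trans ih₂

lemma ofList_mem_positiveMonoid (l : List S) : ofList op hbij l ∈ positiveMonoid op hbij := by
  induction l with
  | nil => exact one_mem _
  | cons u l ih => exact mul_mem ih (Submonoid.subset_closure ⟨_, rfl⟩)

lemma exists_ofList_of_mem_positiveMonoid {x : MonomialData S}
    (hx : x ∈ positiveMonoid op hbij) : ∃ l, ofList op hbij l = x := by
  induction hx using Submonoid.closure_induction_right with
  | one => exact ⟨[], rfl⟩
  | mul_right _ _ _ hs ih =>
    obtain ⟨l, rfl⟩ := ih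
    obtain ⟨s, rfl⟩ := hs
    exact ⟨(ofList op hbij l).perm⁻¹ s :: l, by simp [ofList]⟩

include hcs in
lemma eq_of_exp_eq {x y : MonomialData S} (hx : x ∈ positiveMonoid op hbij)
    (hy : y ∈ positiveMonoid op hbij) (h : x.exp = y.exp) : x = y := by
  obtain ⟨a, rfl⟩ := exists_ofList_of_mem_positiveMonoid hbij hx
  obtain ⟨b, rfl⟩ := exists_ofList_of_mem_positiveMonoid hbij hy
  refine ofList_perm hbij hcs (List.perm_iff_count.2 fun i => ?_)
  simpa [exp_ofList] using congrFun h i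

include hcs in
lemma exists_mul_gen_eq_gen_mul {y : MonomialData S} (hy : y ∈ positiveMonoid op hbij)
    (s : S) :
    ∃ y' ∈ positiveMonoid op hbij, y * gen op hbij (y.perm s) = gen op hbij s * y' := by
  induction hy using Submonoid.closure_induction generalizing s with
  | mem _ ht =>
    obtain ⟨t, rfl⟩ := ht
    exact ⟨gen op hbij (op s t), Submonoid.subset_closure ⟨_, rfl⟩,
      (gen_mul_gen_comm hbij hcs s t).symm⟩
  | one => exact ⟨1, one_mem _, by simp⟩
  | mul y₁ y₂ _ _ ih₁ ih₂ =>
    obtain ⟨y₁', hy₁', h₁⟩ := ih₁ s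
    obtain ⟨y₂', hy₂', h₂⟩ := ih₂ (y₁.perm s)
    refine ⟨y₁' * y₂', mul_mem hy₁' hy₂', ?_⟩
    rw [perm_mul, Equiv.Perm.mul_apply, mul_assoc, h₂, ← mul_assoc, h₁, mul_assoc]

include hcs in
lemma exists_inv_mul_eq_mul_inv {x y : MonomialData S} (hx : x ∈ positiveMonoid op hbij)
    (hy : y ∈ positiveMonoid op hbij) :
    ∃ x' ∈ positiveMonoid op hbij, ∃ y' ∈ positiveMonoid op hbij,
      y⁻¹ * x = x' * y'⁻¹ := by
  induction hx using Submonoid.closure_induction_right with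
  | one => exact ⟨1, one_mem _, y, hy, by simp⟩
  | mul_right x _ _ hs ih =>
    obtain ⟨s, rfl⟩ := hs
    obtain ⟨x', hx', y', hy', h⟩ := ih
    obtain ⟨y'', hy'', h'⟩ := exists_mul_gen_eq_gen_mul hbij hcs hy' s
    refine ⟨x' * gen op hbij (y'.perm s), mul_mem hx' (Submonoid.subset_closure ⟨_, rfl⟩),
      y'', hy'', ?_⟩
    rw [← mul_assoc, h, mul_assoc, mul_assoc, inv_mul_eq_iff_eq_mul.2]
    rw [← mul_assoc, h', mul_inv_cancel_right]

lemma exists_exp_mul_eq_const [Fintype S] {y : MonomialData S}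
    (hy : y ∈ positiveMonoid op hbij) :
    ∃ w ∈ positiveMonoid op hbij, ∃ N : ℤ, (y * w).exp = fun _ => N := by
  obtain ⟨b, rfl⟩ := exists_ofList_of_mem_positiveMonoid hbij hy
  obtain ⟨c, hc⟩ :=
    List.exists_count_eq fun j => b.length - b.count ((ofList op hbij b).perm⁻¹ j)
  refine ⟨ofList op hbij c, ofList_mem_positiveMonoid hbij c, b.length, funext fun i => ?_⟩
  simp [exp_ofList, hc, List.count_le_length]

include hcs in
lemma eq_one_of_exp_eq_zero [Fintype S] {z : MonomialData S}
    (hz : z ∈ Subgroup.closure (Set.range (gen op hbij))) (hexp : z.exp = 0) : z = 1 := by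
  obtain ⟨x, hx, y, hy, rfl⟩ := (positiveMonoid op hbij).exists_eq_mul_inv_of_mem_closure
    (fun x hx y hy => exists_inv_mul_eq_mul_inv hbij hcs hx hy)
    (Subgroup.closure_mono Submonoid.subset_closure hz)
  obtain ⟨w, hw, N, hN⟩ := exists_exp_mul_eq_const hbij hy
  have hxw : x * w = x * y⁻¹ * (y * w) := by group
  have : x * w = y * w := by
    refine eq_of_exp_eq hbij hcs (mul_mem hx hw) (mul_mem hy hw) ?_
    rw [hxw, exp_mul, hexp, hN, zero_add]
    rfl
  rw [mul_inv_eq_one, mul_right_cancel this]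

end CycleSet

end MonomialData

open MonomialData in
/-- The image of the structure group of a finite cycle set under the monomial
representation is permutation-free: the only permutation matrix it contains is the
identity. -/
theorem structureGroup_permutationFree {S : Type*} [Fintype S] [DecidableEq S]
    (op : S → S → S)
    (hbij : ∀ s : S, Function.Bijective (op s))
    (hcs : ∀ s t u : S, op (op s t) (op s u) = op (op t s) (op t u))
    (Θ : StructureGroup op →* Matrix S S (LaurentPolynomial ℚ))
    (hΘ : ∀ s : S, Θ (PresentedGroup.of (rels := csGrpRels op) s)
      = DmatL s * Pmat (LaurentPolynomial ℚ) (psi op hbij s))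
    (g : StructureGroup op) (σ : Equiv.Perm S)
    (hg : Θ g = Pmat (LaurentPolynomial ℚ) σ) :
    σ = 1 := by
  let Φ : StructureGroup op →* MonomialData S :=
    PresentedGroup.toGroup (lift_gen_eq_one_of_mem_csGrpRels hbij hcs)
  have hΘΦ : Θ.toHomUnits = ((toMatrix ℚ).comp Φ).toHomUnits := by
    refine PresentedGroup.ext fun s => Units.ext ?_
    rw [MonoidHom.coe_toHomUnits, MonoidHom.coe_toHomUnits, hΘ, MonoidHom.comp_apply,
      PresentedGroup.toGroup.of, toMatrix_gen]
  have hΦg : Φ g = ⟨0, σ⟩ := toMatrix_injective ℚ <| by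
    rw [toMatrix_mk_zero, ← hg, ← MonoidHom.coe_toHomUnits Θ, hΘΦ, MonoidHom.coe_toHomUnits,
      MonoidHom.comp_apply]
  have hmem : Φ g ∈ Subgroup.closure (Set.range (gen op hbij)) :=
    PresentedGroup.generated_by _ ((Subgroup.closure _).comap Φ) (fun s => by
      rw [Subgroup.mem_comap, PresentedGroup.toGroup.of]
      exact Subgroup.subset_closure ⟨s, rfl⟩) g
  have hone := eq_one_of_exp_eq_zero hbij hcs hmem (by rw [hΦg])
  rw [hΦg] at hone
  exact congrArg perm hone
end

section
/- In the structure monoid of a finite cycle set, g_1 left-divides g_2 if and only if cp(g_1) ≤ cp(g_2) componentwise, where cp(g) = (c_1,...,c_n) records the powers of q in the diagonal part of Θ(g). -/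
/-!
Encode `Θ(g) = diag(q ^ cp g) P_σ` by the pair `(cp g, σ)`. These pairs multiply like the
matrices, `cp (g h) = cp g + cp h ∘ σ`, so `g₂ = g₁ h` forces `cp g₁ ≤ cp g₂`. For the converse,
`cp` is a bijection from the structure monoid onto `S → ℕ`. It is injective because a positive
entry of `cp g` at `t` lets one rewrite `g` as `t h` with the relations `s (s * t) = t (t * s)`,
and then `t` cancels. It is surjective because right multiplication of `g` by the generator `σ i`
adds `1` to `cp g` at `i`. Hence `g₂ = g₁ h` for the `h` with `cp h = (cp g₂ - cp g₁) ∘ σ₁⁻¹`.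
-/

open Polynomial Matrix Function

section PermMatrix

variable {S R : Type*} [DecidableEq S]

lemma Pmat_eq_permMatrix [Semiring R] (σ : Equiv.Perm S) : Pmat R σ = σ.permMatrix R := by
  ext i j
  simp [Pmat, eq_comm]

lemma Matrix.permMatrix_mul_diagonal [Fintype S] [NonAssocSemiring R] (σ : Equiv.Perm S)
    (v : S → R) : σ.permMatrix R * diagonal v = diagonal (v ∘ σ) * σ.permMatrix R := by
  ext i j
  by_cases h : σ i = j <;> simp [h]

end PermMatrix

-- `⟨c, σ⟩` encodes `diag(q ^ c) P_σ` (see `DiagPerm.toMatrix`), so `(thetaHom g).exp` is `cp g`.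
@[ext]
structure DiagPerm (S : Type*) where
  exp : S → ℕ
  perm : Equiv.Perm S

namespace DiagPerm

variable {S : Type*}

instance : Monoid (DiagPerm S) where
  mul a b := ⟨fun i => a.exp i + b.exp (a.perm i), b.perm * a.perm⟩
  one := ⟨0, 1⟩
  mul_assoc a b c := by
    ext i
    · exact add_assoc _ _ _
    · rfl
  one_mul a := by
    ext i
    · exact zero_add _
    · rfl
  mul_one a := by
    ext i
    · exact add_zero _
    · rfl

@[simp] lemma exp_mul (a b : DiagPerm S) (i : S) :
    (a * b).exp i = a.exp i + b.exp (a.perm i) := rfl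

@[simp] lemma perm_mul (a b : DiagPerm S) : (a * b).perm = b.perm * a.perm := rfl

@[simp] lemma exp_one : (1 : DiagPerm S).exp = 0 := rfl

@[simp] lemma perm_one : (1 : DiagPerm S).perm = 1 := rfl

variable [Fintype S] [DecidableEq S] {R : Type*} [Semiring R]

noncomputable def toMatrix : DiagPerm S →* Matrix S S R[X] where
  toFun a := diagonal (fun i => X ^ a.exp i) * Pmat R[X] a.perm
  map_one' := by simp [Pmat_eq_permMatrix]
  map_mul' a b := by
    simp only [Pmat_eq_permMatrix, exp_mul, perm_mul, Matrix.permMatrix_mul, pow_add,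
      ← diagonal_mul_diagonal, Matrix.mul_assoc]
    rw [← Matrix.mul_assoc (a.perm.permMatrix R[X]), Matrix.permMatrix_mul_diagonal]
    simp only [Matrix.mul_assoc]
    rfl

lemma toMatrix_apply (a : DiagPerm S) (i j : S) :
    (toMatrix a : Matrix S S R[X]) i j = if a.perm i = j then X ^ a.exp i else 0 := by
  simp [toMatrix, Pmat, eq_comm]

lemma toMatrix_injective [Nontrivial R] :
    Injective (toMatrix : DiagPerm S → Matrix S S R[X]) := by
  intro a b h
  have entry (i : S) : (X : R[X]) ^ a.exp i = if b.perm i = a.perm i then X ^ b.exp i else 0 := by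
    simpa [toMatrix_apply] using congrFun₂ h i (a.perm i)
  have hperm (i : S) : b.perm i = a.perm i := by
    by_contra hne
    exact (monic_X_pow _).ne_zero (by simpa [hne] using entry i)
  ext i
  · simpa [hperm i] using congrArg natDegree (entry i)
  · exact (hperm i).symm

end DiagPerm

namespace StructureMonoid

variable {S : Type*} {op : S → S → S}

lemma mkM_mul_mkM_op (s t : S) : mkM op s * mkM op (op s t) = mkM op t * mkM op (op t s) :=
  (Con.eq _).2 (ConGen.Rel.of _ _ ⟨s, t, rfl, rfl⟩)

@[elab_as_elim]
lemma induction_on {p : StructureMonoid op → Prop} (g : StructureMonoid op) (one : p 1)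
    (mkM_mul : ∀ s g, p g → p (mkM op s * g)) : p g := by
  induction g using Con.induction_on with | _ w => ?_
  induction w using FreeMonoid.recOn with
  | one => exact one
  | of_mul s w ih => exact mkM_mul s w ih

lemma eq_one_or_exists_eq_mkM_mul (g : StructureMonoid op) :
    g = 1 ∨ ∃ s h, g = mkM op s * h := by
  induction g using induction_on with
  | one => exact .inl rfl
  | mkM_mul s g _ => exact .inr ⟨s, g, rfl⟩

lemma hom_ext {M : Type*} [Monoid M] {f f' : StructureMonoid op →* M}
    (h : ∀ s, f (mkM op s) = f' (mkM op s)) : f = f' :=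
  Con.hom_ext (FreeMonoid.hom_eq h)

variable [DecidableEq S] (hbij : ∀ s : S, Bijective (op s))
  (hcs : ∀ s t u : S, op (op s t) (op s u) = op (op t s) (op t u))

noncomputable def thetaGen (s : S) : DiagPerm S := ⟨Pi.single s 1, psi op hbij s⟩

include hcs in
lemma thetaGen_mul_thetaGen_op (s t : S) :
    thetaGen hbij s * thetaGen hbij (op s t) = thetaGen hbij t * thetaGen hbij (op t s) := by
  ext i
  · simp [thetaGen, psi, Pi.single_apply, (hbij s).injective.eq_iff, (hbij t).injective.eq_iff,
      add_comm]
  · exact hcs s t i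

noncomputable def thetaHom : StructureMonoid op →* DiagPerm S :=
  (conGen (csRel op)).lift (FreeMonoid.lift (thetaGen hbij)) <| Con.conGen_le.2 <| by
    rintro _ _ ⟨s, t, rfl, rfl⟩
    simp [Con.ker_rel, thetaGen_mul_thetaGen_op hbij hcs]

lemma thetaHom_mkM (s : S) : thetaHom hbij hcs (mkM op s) = thetaGen hbij s :=
  (Con.lift_mk' _ _).trans (FreeMonoid.lift_eval_of _ _)

lemma exp_thetaHom_mkM_mul (s : S) (g : StructureMonoid op) (i : S) :
    (thetaHom hbij hcs (mkM op s * g)).exp i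
      = (Pi.single s 1 : S → ℕ) i + (thetaHom hbij hcs g).exp (op s i) := by
  rw [map_mul, thetaHom_mkM]
  rfl

lemma exp_thetaHom_mul_mkM_perm (g : StructureMonoid op) (i : S) :
    (thetaHom hbij hcs (g * mkM op ((thetaHom hbij hcs g).perm i))).exp
      = (thetaHom hbij hcs g).exp + Pi.single i 1 := by
  ext j
  simp [thetaHom_mkM, thetaGen, Pi.single_apply]

lemma exists_eq_mkM_mul_of_exp_pos {g : StructureMonoid op} {t : S}
    (ht : 0 < (thetaHom hbij hcs g).exp t) : ∃ h, g = mkM op t * h := by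
  induction g using induction_on generalizing t with
  | one => simp at ht
  | mkM_mul s g ih =>
    by_cases hts : t = s
    · exact ⟨g, hts ▸ rfl⟩
    · obtain ⟨h, rfl⟩ := ih (t := op s t)
        (by rwa [exp_thetaHom_mkM_mul, Pi.single_eq_of_ne hts, zero_add] at ht)
      exact ⟨mkM op (op t s) * h, by rw [← mul_assoc, mkM_mul_mkM_op, mul_assoc]⟩

variable [Fintype S]

lemma sum_exp_thetaHom_mkM_mul (s : S) (g : StructureMonoid op) :
    ∑ i, (thetaHom hbij hcs (mkM op s * g)).exp i = ∑ i, (thetaHom hbij hcs g).exp i + 1 := by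
  simp only [exp_thetaHom_mkM_mul, Finset.sum_add_distrib, Finset.sum_pi_single', Finset.mem_univ,
    if_true, add_comm 1]
  exact congrArg (· + 1) ((Equiv.ofBijective _ (hbij s)).sum_comp _)

lemma exp_thetaHom_injective : Injective fun g => (thetaHom hbij hcs g).exp := by
  intro g₁ g₂ (h : (thetaHom hbij hcs g₁).exp = (thetaHom hbij hcs g₂).exp)
  -- `∑ i, cp g i` is the length of `g`.
  induction hn : ∑ i, (thetaHom hbij hcs g₁).exp i using Nat.strong_induction_on
    generalizing g₁ g₂ with | _ n ih => ?_
  rcases eq_one_or_exists_eq_mkM_mul g₂ with rfl | ⟨t, h₂, rfl⟩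
  · rcases eq_one_or_exists_eq_mkM_mul g₁ with rfl | ⟨s, h₁, rfl⟩
    · rfl
    · have hs := congrFun h s
      simp only [exp_thetaHom_mkM_mul, Pi.single_eq_same, map_one, DiagPerm.exp_one,
        Pi.zero_apply] at hs
      omega
  · obtain ⟨h₁, rfl⟩ := exists_eq_mkM_mul_of_exp_pos hbij hcs (t := t)
      (by rw [h, exp_thetaHom_mkM_mul, Pi.single_eq_same]; omega)
    have hexp : (thetaHom hbij hcs h₁).exp = (thetaHom hbij hcs h₂).exp := by
      funext j
      obtain ⟨i, rfl⟩ := (hbij t).surjective j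
      simpa only [exp_thetaHom_mkM_mul, add_right_inj] using congrFun h i
    rw [ih _ (by rw [← hn, sum_exp_thetaHom_mkM_mul]; omega) hexp rfl]

lemma exp_thetaHom_surjective : Surjective fun g => (thetaHom hbij hcs g).exp := by
  intro d
  induction d using WellFoundedLT.induction with | _ d ih => ?_
  by_cases hd : d = 0
  · exact ⟨1, by simp [hd]⟩
  obtain ⟨i, hi⟩ : ∃ i, d i ≠ 0 := Function.ne_iff.1 hd
  obtain ⟨g, hg⟩ := ih (d - Pi.single i 1)
    (Pi.lt_def.2 ⟨fun _ => tsub_le_self, i, by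
      simp only [Pi.sub_apply, Pi.single_eq_same]; omega⟩)
  refine ⟨g * mkM op ((thetaHom hbij hcs g).perm i), ?_⟩
  simp only [exp_thetaHom_mul_mkM_perm, hg]
  ext j
  by_cases hj : j = i
  · subst hj
    simp only [Pi.add_apply, Pi.sub_apply, Pi.single_eq_same]
    omega
  · simp [hj]

lemma exists_eq_mul_iff_exp_le (g₁ g₂ : StructureMonoid op) :
    (∃ h, g₂ = g₁ * h) ↔ (thetaHom hbij hcs g₁).exp ≤ (thetaHom hbij hcs g₂).exp := by
  constructor
  · rintro ⟨h, rfl⟩ i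
    simp
  · intro hle
    obtain ⟨h, hh⟩ := exp_thetaHom_surjective hbij hcs
      (((thetaHom hbij hcs g₂).exp - (thetaHom hbij hcs g₁).exp) ∘
        (thetaHom hbij hcs g₁).perm.symm)
    refine ⟨h, exp_thetaHom_injective hbij hcs (funext fun i => ?_)⟩
    simp only [map_mul, DiagPerm.exp_mul, hh, Function.comp_apply, Equiv.symm_apply_apply,
      Pi.sub_apply]
    exact (Nat.add_sub_of_le (hle i)).symm

lemma toMatrix_thetaGen (s : S) : DiagPerm.toMatrix (thetaGen hbij s) = theta op hbij s := by
  simp only [DiagPerm.toMatrix, theta, Dmat, thetaGen, MonoidHom.coe_mk, OneHom.coe_mk]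
  congr
  funext t
  by_cases h : t = s <;> simp [h]

lemma toMatrix_comp_thetaHom {Θ : StructureMonoid op →* Matrix S S ℚ[X]}
    (hΘ : ∀ s, Θ (mkM op s) = theta op hbij s) :
    DiagPerm.toMatrix.comp (thetaHom hbij hcs) = Θ :=
  hom_ext fun s => by simp [thetaHom_mkM, toMatrix_thetaGen, hΘ]

end StructureMonoid

/-- In the structure monoid of a finite cycle set, `g₁` left-divides `g₂` if and only if
the coefficient-powers tuple of `g₁` is componentwise at most that of `g₂`. -/
theorem leftDvd_iff_cp_le {S : Type*} [Fintype S] [DecidableEq S] (op : S → S → S)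
    (hbij : ∀ s : S, Function.Bijective (op s))
    (hcs : ∀ s t u : S, op (op s t) (op s u) = op (op t s) (op t u))
    (Θ : StructureMonoid op →* Matrix S S (Polynomial ℚ))
    (hΘ : ∀ s : S, Θ (mkM op s) = theta op hbij s)
    (g₁ g₂ : StructureMonoid op) (c₁ c₂ : S → ℕ) (σ₁ σ₂ : Equiv.Perm S)
    (hg₁ : Θ g₁ = Matrix.diagonal (fun j => (Polynomial.X : Polynomial ℚ) ^ c₁ j) *
      Pmat (Polynomial ℚ) σ₁)
    (hg₂ : Θ g₂ = Matrix.diagonal (fun j => (Polynomial.X : Polynomial ℚ) ^ c₂ j) *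
      Pmat (Polynomial ℚ) σ₂) :
    (∃ h : StructureMonoid op, g₂ = g₁ * h) ↔ ∀ i : S, c₁ i ≤ c₂ i := by
  have hΘ' := StructureMonoid.toMatrix_comp_thetaHom hbij hcs hΘ
  have h₁ : StructureMonoid.thetaHom hbij hcs g₁ = ⟨c₁, σ₁⟩ :=
    DiagPerm.toMatrix_injective (by rw [← MonoidHom.comp_apply, hΘ', hg₁]; rfl)
  have h₂ : StructureMonoid.thetaHom hbij hcs g₂ = ⟨c₂, σ₂⟩ :=
    DiagPerm.toMatrix_injective (by rw [← MonoidHom.comp_apply, hΘ', hg₂]; rfl)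
  rw [StructureMonoid.exists_eq_mul_iff_exp_le hbij hcs, h₁, h₂]
  rfl
end

section
/- In a finite cycle set, the diagonal map T : s ↦ s*s is injective (hence bijective): if s*s = s'*s' then s = s'. -/
universe u

theorem diag_surj_aux (n : ℕ) : ∀ {S : Type u} [Fintype S] (op : S → S → S),
    Fintype.card S ≤ n →
    (∀ s : S, Function.Bijective (op s)) →
    (∀ s t u : S, op (op s t) (op s u) = op (op t s) (op t u)) →
    Function.Surjective (fun s : S => op s s) := by
  induction n with
  | zero =>
      intro S _ op hcard hbij hcs c
      exact absurd (Fintype.card_pos_iff.mpr ⟨c⟩) (by omega)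
  | succ n ih =>
      intro S _ op hcard hbij hcs
      classical
      by_contra hns
      set T : S → S := fun s => op s s with hT
      set R : Set S := Set.range T with hR
      -- key identity: T (op s t) = op (op t s) (T t)
      have key : ∀ s t : S, op (op s t) (op s t) = op (op t s) (op t t) :=
        fun s t => hcs s t t
      -- R is closed under op v for any v
      have step : ∀ v : S, ∀ r ∈ R, op v r ∈ R := by
        rintro v r ⟨t, rfl⟩
        obtain ⟨s, hs⟩ := (hbij t).2 v
        exact ⟨op s t, by simp only [hT]; rw [key s t, hs]⟩
      -- hence op v maps R bijectively onto R
      have himg : ∀ v : S, op v '' R = R := by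
        intro v
        apply Set.eq_of_subset_of_ncard_le
        · rintro x ⟨r, hr, rfl⟩; exact step v r hr
        · rw [Set.ncard_image_of_injective _ (hbij v).1]
        · exact Set.toFinite R
      have back : ∀ v x : S, op v x ∈ R → x ∈ R := by
        intro v x hx
        rw [← himg v] at hx
        obtain ⟨y, hy, hyx⟩ := hx
        rwa [← (hbij v).1 hyx]
      -- the complement C is nonempty
      have hCne : ∃ c : S, c ∉ R := by
        by_contra h
        push_neg at h
        exact hns (fun c => h c)
      obtain ⟨c0, hc0⟩ := hCne
      set C : Set S := Rᶜ with hC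
      have hc0C : c0 ∈ C := hc0
      -- C is a sub-cycle-set
      have closed : ∀ a b : S, a ∈ C → b ∈ C → op a b ∈ C := by
        intro a b _ hb hmem
        exact hb (back a b hmem)
      let op' : C → C → C := fun a b => ⟨op a b, closed a b a.2 b.2⟩
      have hbij' : ∀ a : C, Function.Bijective (op' a) := by
        intro a
        constructor
        · intro x y hxy
          exact Subtype.ext ((hbij a).1 (congrArg Subtype.val hxy))
        · intro b
          obtain ⟨x, hx⟩ := (hbij (a : S)).2 (b : S)
          have hxC : x ∈ C := by
            intro hxR
            exact b.2 (hx ▸ step a x hxR)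
          exact ⟨⟨x, hxC⟩, Subtype.ext hx⟩
      have hcs' : ∀ s t u : C, op' (op' s t) (op' s u) = op' (op' t s) (op' t u) :=
        fun s t u => Subtype.ext (hcs s t u)
      -- cardinality decreases: some element (namely T c0) is in R, hence not in C
      have hmemR : T c0 ∈ R := ⟨c0, rfl⟩
      have hcardC : Fintype.card C < Fintype.card S :=
        Fintype.card_subtype_lt (x := T c0) (fun h => h hmemR)
      have hsurj' := ih op' (by omega) hbij' hcs'
      obtain ⟨s, hs⟩ := hsurj' ⟨c0, hc0C⟩
      exact hc0 ⟨s, congrArg Subtype.val hs⟩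

/-- In a finite cycle set, the diagonal map `T : s ↦ s*s` is injective, hence bijective. -/
theorem diagonal_map_bijective {S : Type*} [Fintype S] (op : S → S → S)
    (hbij : ∀ s : S, Function.Bijective (op s))
    (hcs : ∀ s t u : S, op (op s t) (op s u) = op (op t s) (op t u)) :
    (∀ s s' : S, op s s = op s' s' → s = s') ∧
      Function.Bijective (fun s : S => op s s) := by
  have hsurj : Function.Surjective (fun s : S => op s s) :=
    diag_surj_aux (Fintype.card S) op le_rfl hbij hcs
  have hb : Function.Bijective (fun s : S => op s s) :=
    (Finite.surjective_iff_bijective).mp hsurj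
  exact ⟨fun s s' h => hb.1 h, hb⟩
end

section
/- A finite cycle set is non-degenerate: the map S × S → S × S given by (s,t) ↦ (s*t, t*s) is bijective. -/
/-!
Write `σ s = op s`. On multisets over `S` the fold `σ_{x ::ₘ a} = σ (σ_a x) * σ_a` is well defined
precisely because of the cycle set identity, and `a ∘ b = a + σ_a⁻¹ b` is an associative,
left-cancellative product with `σ_{a ∘ b} = σ_b * σ_a`. Taking every element of `S` with
multiplicity the order of `σ_S` gives a multiset `m` fixed by all permutations with `σ_m = 1`,
so `m ∘ a = m + a = a ∘ m`. Now `{z} ∘ (m - {z * z}) = m`, and by centrality and cancellation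
also `(m - {z * z}) ∘ {z} = m`; hence `z * z` determines `z`. Finally `(s * t) * (s * t) =
(t * s) * (t * t)` recovers `t * t`, hence `t`, from `(s * t, t * s)`, and symmetrically `s`.
-/

open Multiset

namespace CycleSet

variable {S : Type*} (σ : S → Equiv.Perm S)

def permStep (x : S) (ρ : Equiv.Perm S) : Equiv.Perm S := σ (ρ x) * ρ

variable {σ} in
theorem leftCommutative_permStep (hc : ∀ s t : S, σ (σ s t) * σ s = σ (σ t s) * σ t) :
    LeftCommutative (permStep σ) where
  left_comm x y ρ := by
    simp only [permStep, Equiv.Perm.mul_apply, ← mul_assoc, hc (ρ x) (ρ y)]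

variable (hc : ∀ s t : S, σ (σ s t) * σ s = σ (σ t s) * σ t)

def multisetPerm (a : Multiset S) : Equiv.Perm S :=
  @foldr S _ (permStep σ) (leftCommutative_permStep hc) 1 a

@[simp]
theorem multisetPerm_zero : multisetPerm σ hc 0 = 1 := rfl

@[simp]
theorem multisetPerm_cons (x : S) (a : Multiset S) :
    multisetPerm σ hc (x ::ₘ a) = σ (multisetPerm σ hc a x) * multisetPerm σ hc a :=
  @foldr_cons S _ (permStep σ) (leftCommutative_permStep hc) 1 x a

@[simp]
theorem multisetPerm_singleton (x : S) : multisetPerm σ hc {x} = σ x := by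
  rw [← cons_zero, multisetPerm_cons, multisetPerm_zero, mul_one, Equiv.Perm.one_apply]

theorem multisetPerm_add (a b : Multiset S) :
    multisetPerm σ hc (a + b) =
      multisetPerm σ hc (b.map (multisetPerm σ hc a)) * multisetPerm σ hc a := by
  induction b using Multiset.induction_on with
  | empty => simp
  | cons x b ih =>
    rw [add_cons, multisetPerm_cons, ih, map_cons, multisetPerm_cons, Equiv.Perm.mul_apply,
      mul_assoc]

def braceMul (a b : Multiset S) : Multiset S := a + b.map ⇑(multisetPerm σ hc a)⁻¹

theorem multisetPerm_braceMul (a b : Multiset S) :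
    multisetPerm σ hc (braceMul σ hc a b) = multisetPerm σ hc b * multisetPerm σ hc a := by
  rw [braceMul, multisetPerm_add, map_map, ← Equiv.Perm.coe_mul, mul_inv_cancel,
    Equiv.Perm.coe_one, map_id]

theorem braceMul_assoc (a b c : Multiset S) :
    braceMul σ hc (braceMul σ hc a b) c = braceMul σ hc a (braceMul σ hc b c) := by
  rw [braceMul, multisetPerm_braceMul, mul_inv_rev, Equiv.Perm.coe_mul, ← map_map]
  simp only [braceMul, Multiset.map_add, add_assoc]

theorem braceMul_left_cancel {a b c : Multiset S} (h : braceMul σ hc a b = braceMul σ hc a c) :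
    b = c :=
  map_injective (Equiv.injective _) (add_left_cancel h)

section Finite

variable [Fintype S]

theorem multisetPerm_nsmul_univ (n : ℕ) :
    multisetPerm σ hc (n • Finset.univ.val) = multisetPerm σ hc Finset.univ.val ^ n := by
  induction n with
  | zero => simp
  | succ n ih => rw [succ_nsmul, multisetPerm_add, map_univ_val_equiv, ih, ← pow_succ']

noncomputable def fullMultiset : Multiset S :=
  orderOf (multisetPerm σ hc Finset.univ.val) • Finset.univ.val

theorem mem_fullMultiset (z : S) : z ∈ fullMultiset σ hc :=
  mem_nsmul.mpr ⟨(orderOf_pos _).ne', Finset.mem_univ z⟩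

theorem map_fullMultiset (f : Equiv.Perm S) :
    (fullMultiset σ hc).map f = fullMultiset σ hc := by
  rw [fullMultiset, map_nsmul, map_univ_val_equiv]

theorem multisetPerm_fullMultiset : multisetPerm σ hc (fullMultiset σ hc) = 1 := by
  rw [fullMultiset, multisetPerm_nsmul_univ, pow_orderOf_eq_one]

theorem braceMul_fullMultiset_comm (a : Multiset S) :
    braceMul σ hc (fullMultiset σ hc) a = braceMul σ hc a (fullMultiset σ hc) := by
  rw [braceMul, braceMul, multisetPerm_fullMultiset, map_fullMultiset, inv_one,
    Equiv.Perm.coe_one, map_id, add_comm]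

theorem braceMul_singleton_sub_square [DecidableEq S] (z : S) :
    braceMul σ hc {z} (fullMultiset σ hc - {σ z z}) = fullMultiset σ hc := by
  have hsplit : fullMultiset σ hc - {σ z z} + {σ z z} = fullMultiset σ hc :=
    tsub_add_cancel_of_le (singleton_le.mpr (mem_fullMultiset σ hc _))
  have := congrArg (map ⇑(σ z)⁻¹) hsplit
  rwa [Multiset.map_add, map_singleton, Equiv.Perm.coe_inv, Equiv.symm_apply_apply,
    ← Equiv.Perm.coe_inv, map_fullMultiset, add_comm, ← multisetPerm_singleton σ hc, ← braceMul]
    at this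

end Finite

theorem square_injective [Finite S] {σ : S → Equiv.Perm S}
    (hc : ∀ s t : S, σ (σ s t) * σ s = σ (σ t s) * σ t) :
    Function.Injective fun x => σ x x := by
  classical
  have := Fintype.ofFinite S
  intro x y hxy
  set m := fullMultiset σ hc
  have left_inv : ∀ z, braceMul σ hc (m - {σ z z}) {z} = m := fun z =>
    braceMul_left_cancel σ hc (a := {z}) <| by
      rw [← braceMul_assoc, braceMul_singleton_sub_square, braceMul_fullMultiset_comm]
  have := (left_inv x).trans (left_inv y).symm
  simp only [hxy] at this
  exact singleton_inj.mp (braceMul_left_cancel σ hc this)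

theorem pairMap_injective_of_square_injective (op : S → S → S)
    (hinj : ∀ s, Function.Injective (op s))
    (hcs : ∀ s t u : S, op (op s t) (op s u) = op (op t s) (op t u))
    (hsq : Function.Injective fun x => op x x) :
    Function.Injective fun p : S × S => (op p.1 p.2, op p.2 p.1) := by
  have square_eq : ∀ {a b a' b' : S}, op a b = op a' b' → op b a = op b' a' →
      op b b = op b' b' := by
    intro a b a' b' e1 e2
    apply hinj (op b a)
    rw [← hcs a b b, e1, e2, hcs a' b' b']
  rintro ⟨s, t⟩ ⟨s', t'⟩ h
  obtain ⟨h1, h2⟩ := Prod.mk.inj h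
  exact Prod.ext (hsq (square_eq h2 h1)) (hsq (square_eq h1 h2))

end CycleSet

open CycleSet

/-- A finite cycle set is non-degenerate: `(s,t) ↦ (s*t, t*s)` is a bijection of `S × S`. -/
theorem cycleSet_nondegenerate {S : Type*} [Fintype S] (op : S → S → S)
    (hbij : ∀ s : S, Function.Bijective (op s))
    (hcs : ∀ s t u : S, op (op s t) (op s u) = op (op t s) (op t u)) :
    Function.Bijective (fun p : S × S => (op p.1 p.2, op p.2 p.1)) := by
  let σ : S → Equiv.Perm S := fun s => Equiv.ofBijective (op s) (hbij s)
  have hc : ∀ s t, σ (σ s t) * σ s = σ (σ t s) * σ t := fun s t => Equiv.ext (hcs s t)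
  rw [← Finite.injective_iff_bijective]
  exact pairMap_injective_of_square_injective op (fun s => (hbij s).1) hcs (square_injective hc)
end
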